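/- arXiv:2601.10670 — 3 statements merged into one kernel-verified Lean document; each statement's English description precedes it below -/
import Mathlib

section
/- Let ℓ ≥ 1 and let A ∈ GL₂(𝔬_ℓ). Then A is real in GL₂(𝔬_ℓ) (i.e., A is conjugate in GL₂(𝔬_ℓ) to A⁻¹) if and only if det(A) ∈ {1, −1} and tr(A) = tr(A⁻¹). -/
/-!
Over `𝔬_ℓ` the element `2` is a unit and divisibility is total. If `A` is real, `det` and
`trace` are conjugation invariant, so `det A ^ 2 = det A * det A⁻¹ = 1` and `det A = ±1`.
Conversely, if `det A = -1` then `A⁻¹ = -adj A = A - trace A`, and the trace condition forces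
`trace A = 0`, i.e. `A⁻¹ = A`. If `det A = 1` then `A⁻¹ = adj A`, and a traceless `Y`
satisfies `Y A - (adj A) Y = trace (Y A)`. Since divisibility is total, `A = a + g A₁` with one
off-scalar entry of `A₁` equal to `1`, and then an explicit traceless `Y` with unit determinant
and `trace (Y A₁) = 0` conjugates `A` to `A⁻¹`.
-/

open Matrix

variable {R : Type*} [CommRing R]

theorem IsLocalRing.isUnit_two_of_odd_ringChar [IsLocalRing R]
    (h : Odd (ringChar (ResidueField R))) : IsUnit (2 : R) := by
  rw [← residue_ne_zero_iff_isUnit, map_ofNat]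
  exact Ring.two_ne_zero fun h2 ↦ Nat.not_odd_iff_even.mpr even_two (h2 ▸ h)

theorem IsLocalRing.eq_one_or_eq_neg_one_of_mul_self_eq_one [IsLocalRing R]
    (h2 : IsUnit (2 : R)) {u : R} (hu : u * u = 1) : u = 1 ∨ u = -1 := by
  have hsum : (u + 1) + (1 - u) = 2 := by ring
  rcases isUnit_or_isUnit_of_isUnit_add (hsum ▸ h2) with h | h
  · left
    exact sub_eq_zero.mp (h.mul_right_eq_zero.mp (by linear_combination hu))
  · right
    exact eq_neg_of_add_eq_zero_left (h.mul_right_eq_zero.mp (by linear_combination -hu))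

theorem PreValuationRing.exists_common_factor [PreValuationRing R] (b c e : R) :
    ∃ g b' c' e' : R,
      b = g * b' ∧ c = g * c' ∧ e = g * e' ∧ (b' = 1 ∨ c' = 1 ∨ e' = 1) := by
  rcases ValuationRing.dvd_total b c with ⟨k, rfl⟩ | ⟨k, rfl⟩
  · rcases ValuationRing.dvd_total b e with ⟨m, rfl⟩ | ⟨m, rfl⟩
    · exact ⟨b, 1, k, m, by simp, rfl, rfl, by simp⟩
    · exact ⟨e, m, m * k, 1, rfl, by ring, by simp, by simp⟩
  · rcases ValuationRing.dvd_total c e with ⟨m, rfl⟩ | ⟨m, rfl⟩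
    · exact ⟨c, k, 1, m, rfl, by simp, rfl, by simp⟩
    · exact ⟨e, m * k, m, 1, by ring, rfl, by simp, by simp⟩

theorem IsLocalRing.exists_traceless_isUnit_det_trace_mul_eq_zero [IsLocalRing R] {b c e : R}
    (h : IsUnit b ∨ IsUnit c ∨ IsUnit e) :
    ∃ Y : Matrix (Fin 2) (Fin 2) R,
      trace Y = 0 ∧ IsUnit Y.det ∧ trace (Y * !![0, b; c, e]) = 0 := by
  by_cases hb : IsUnit b
  · refine ⟨!![b, 0; e, -b], by simp [trace_fin_two_of], ?_, ?_⟩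
    · simpa [det_fin_two_of] using (hb.mul hb).neg
    · simp [trace_fin_two_of]; ring
  by_cases hc : IsUnit c
  · refine ⟨!![c, e; 0, -c], by simp [trace_fin_two_of], ?_, ?_⟩
    · simpa [det_fin_two_of] using (hc.mul hc).neg
    · simp [trace_fin_two_of]; ring
  have he : IsUnit e := by tauto
  refine ⟨!![c - b, e; -e, b - c], by simp [trace_fin_two_of], ?_, ?_⟩
  · have hcb : ¬IsUnit (c - b) := fun hu ↦
      (isUnit_or_isUnit_of_isUnit_add (by simpa [sub_eq_add_neg] using hu)).elim hc
        fun hb' ↦ hb (by simpa using hb')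
    have hdet : (c - b) * (b - c) - e * -e = e * e - (c - b) * (c - b) := by ring
    rw [det_fin_two_of, hdet]
    exact (isUnit_or_isUnit_of_isUnit_add (a := e * e - (c - b) * (c - b)) (b := (c - b) * (c - b))
      (by simpa using he.mul he)).resolve_right fun hu ↦ hcb (isUnit_of_mul_isUnit_left hu)
  · simp [trace_fin_two_of]; ring

namespace Matrix

theorem adjugate_fin_two_eq_trace_smul_sub (M : Matrix (Fin 2) (Fin 2) R) :
    adjugate M = trace M • 1 - M := by
  ext i j
  fin_cases i <;> fin_cases j <;> simp [adjugate_fin_two, trace_fin_two]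

theorem trace_adjugate_fin_two (M : Matrix (Fin 2) (Fin 2) R) :
    trace (adjugate M) = trace M := by
  simp [adjugate_fin_two, trace_fin_two, add_comm]

theorem mul_sub_adjugate_mul_of_trace_eq_zero {Y : Matrix (Fin 2) (Fin 2) R}
    (hY : trace Y = 0) (M : Matrix (Fin 2) (Fin 2) R) :
    Y * M - adjugate M * Y = trace (Y * M) • 1 := by
  have hY11 : Y 1 1 = -Y 0 0 := eq_neg_of_add_eq_zero_right (trace_fin_two Y ▸ hY)
  rw [eta_fin_two Y, eta_fin_two M, hY11]
  ext i j
  fin_cases i <;> fin_cases j <;> simp [adjugate_fin_two_of, trace_fin_two_of] <;> ring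

theorem exists_traceless_isUnit_det_trace_mul_eq_zero [PreValuationRing R] [Nontrivial R]
    (M : Matrix (Fin 2) (Fin 2) R) :
    ∃ Y : Matrix (Fin 2) (Fin 2) R, trace Y = 0 ∧ IsUnit Y.det ∧ trace (Y * M) = 0 := by
  obtain ⟨g, b, c, e, hb, hc, he, hbce⟩ :=
    PreValuationRing.exists_common_factor (M 0 1) (M 1 0) (M 1 1 - M 0 0)
  have hM : M = M 0 0 • 1 + g • !![0, b; c, e] := by
    ext i j
    fin_cases i <;> fin_cases j <;> simp [← hb, ← hc, ← he]
  obtain ⟨Y, hY, hdet, htr⟩ := IsLocalRing.exists_traceless_isUnit_det_trace_mul_eq_zero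
    (b := b) (c := c) (e := e) (by rcases hbce with h | h | h <;> simp [h])
  refine ⟨Y, hY, hdet, ?_⟩
  rw [hM, mul_add, trace_add, mul_smul_comm, mul_smul_comm, trace_smul, trace_smul, mul_one, hY,
    htr, smul_zero, smul_zero, add_zero]

theorem exists_mul_eq_adjugate_mul [PreValuationRing R] [Nontrivial R]
    (M : Matrix (Fin 2) (Fin 2) R) : ∃ Y : GL (Fin 2) R, Y * M = adjugate M * Y := by
  obtain ⟨Y, hY, hdet, htr⟩ := exists_traceless_isUnit_det_trace_mul_eq_zero M
  refine ⟨((isUnit_iff_isUnit_det Y).mpr hdet).unit, sub_eq_zero.mp ?_⟩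
  rw [IsUnit.unit_spec, mul_sub_adjugate_mul_of_trace_eq_zero hY, htr, zero_smul]

namespace GeneralLinearGroup

theorem det_eq_and_trace_eq_of_isConj {n : Type*} [Fintype n] [DecidableEq n] {A B : GL n R}
    (h : IsConj A B) : (A : Matrix n n R).det = (B : Matrix n n R).det ∧
      trace (A : Matrix n n R) = trace (B : Matrix n n R) := by
  obtain ⟨C, rfl⟩ := isConj_iff.mp h
  simp only [Units.val_mul]
  exact ⟨(det_units_conj C A).symm, (trace_units_conj C A).symm⟩

theorem isConj_inv_of_det_eq_one [PreValuationRing R] {A : GL (Fin 2) R}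
    (hA : (A : Matrix (Fin 2) (Fin 2) R).det = 1) : IsConj A A⁻¹ := by
  nontriviality R
  obtain ⟨Y, hY⟩ := exists_mul_eq_adjugate_mul (A : Matrix (Fin 2) (Fin 2) R)
  have hinv : ((A⁻¹ : GL (Fin 2) R) : Matrix (Fin 2) (Fin 2) R) = adjugate A :=
    (Units.eq_inv_of_mul_eq_one_left (by rw [mul_adjugate, hA, one_smul])).symm
  refine isConj_iff.mpr ⟨Y, mul_inv_eq_iff_eq_mul.mpr (Units.ext ?_)⟩
  rw [Units.val_mul, Units.val_mul, hinv, hY]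

theorem inv_eq_self_of_det_eq_neg_one (h2 : IsUnit (2 : R)) {A : GL (Fin 2) R}
    (hA : (A : Matrix (Fin 2) (Fin 2) R).det = -1)
    (htr : trace (A : Matrix (Fin 2) (Fin 2) R) =
      trace ((A⁻¹ : GL (Fin 2) R) : Matrix (Fin 2) (Fin 2) R)) :
    A⁻¹ = A := by
  have hinv : ((A⁻¹ : GL (Fin 2) R) : Matrix (Fin 2) (Fin 2) R) = -adjugate A :=
    (Units.eq_inv_of_mul_eq_one_left
      (by rw [mul_neg, mul_adjugate, hA, neg_one_smul, neg_neg])).symm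
  have htr0 : trace (A : Matrix (Fin 2) (Fin 2) R) = 0 := by
    rw [hinv, trace_neg, trace_adjugate_fin_two] at htr
    exact h2.mul_left_cancel (by linear_combination htr)
  ext1
  rw [hinv, adjugate_fin_two_eq_trace_smul_sub, htr0, zero_smul, zero_sub, neg_neg]

theorem isConj_inv_iff_det_trace [PreValuationRing R] (h2 : IsUnit (2 : R)) (A : GL (Fin 2) R) :
    IsConj A A⁻¹ ↔
      ((A : Matrix (Fin 2) (Fin 2) R).det = 1 ∨ (A : Matrix (Fin 2) (Fin 2) R).det = -1) ∧
        trace (A : Matrix (Fin 2) (Fin 2) R) =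
          trace ((A⁻¹ : GL (Fin 2) R) : Matrix (Fin 2) (Fin 2) R) := by
  nontriviality R
  constructor
  · intro h
    obtain ⟨hdet, htr⟩ := det_eq_and_trace_eq_of_isConj h
    refine ⟨IsLocalRing.eq_one_or_eq_neg_one_of_mul_self_eq_one h2 ?_, htr⟩
    conv_lhs => arg 2; rw [hdet]
    rw [← det_mul, ← Units.val_mul, mul_inv_cancel, Units.val_one, det_one]
  · rintro ⟨hdet | hdet, htr⟩
    · exact isConj_inv_of_det_eq_one hdet
    · rw [inv_eq_self_of_det_eq_neg_one h2 hdet htr]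

end GeneralLinearGroup

end Matrix

theorem real_iff_det_trace_GL2_general
    (O : Type) [CommRing O] [IsDomain O] [IsDiscreteValuationRing O]
    (π : O)
    (hodd : Odd (ringChar (IsLocalRing.ResidueField O)))
    (ℓ : ℕ)
    (A : GL (Fin 2) (O ⧸ Ideal.span {π} ^ ℓ)) :
    IsConj A A⁻¹ ↔
      (((A : Matrix (Fin 2) (Fin 2) (O ⧸ Ideal.span {π} ^ ℓ)).det = 1 ∨
        (A : Matrix (Fin 2) (Fin 2) (O ⧸ Ideal.span {π} ^ ℓ)).det = -1) ∧
       Matrix.trace (A : Matrix (Fin 2) (Fin 2) (O ⧸ Ideal.span {π} ^ ℓ)) =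
         Matrix.trace ((A⁻¹ : GL (Fin 2) (O ⧸ Ideal.span {π} ^ ℓ)) :
           Matrix (Fin 2) (Fin 2) (O ⧸ Ideal.span {π} ^ ℓ))) := by
  have : PreValuationRing (O ⧸ Ideal.span {π} ^ ℓ) :=
    Ideal.Quotient.mk_surjective.preValuationRing (Ideal.Quotient.mk _).toMulHom
  have h2 := (IsLocalRing.isUnit_two_of_odd_ringChar hodd).map
    (Ideal.Quotient.mk (Ideal.span {π} ^ ℓ))
  rw [map_ofNat] at h2
  exact GeneralLinearGroup.isConj_inv_iff_det_trace h2 A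

theorem real_iff_det_trace_GL2
    (O : Type) [CommRing O] [IsDomain O] [IsDiscreteValuationRing O]
    [IsAdicComplete (IsLocalRing.maximalIdeal O) O]
    (π : O) (hπ : IsLocalRing.maximalIdeal O = Ideal.span {π})
    [Finite (IsLocalRing.ResidueField O)]
    (hodd : Odd (ringChar (IsLocalRing.ResidueField O)))
    (ℓ : ℕ) (hℓ : 1 ≤ ℓ)
    (A : GL (Fin 2) (O ⧸ Ideal.span {π} ^ ℓ)) :
    IsConj A A⁻¹ ↔
      (((A : Matrix (Fin 2) (Fin 2) (O ⧸ Ideal.span {π} ^ ℓ)).det = 1 ∨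
        (A : Matrix (Fin 2) (Fin 2) (O ⧸ Ideal.span {π} ^ ℓ)).det = -1) ∧
       Matrix.trace (A : Matrix (Fin 2) (Fin 2) (O ⧸ Ideal.span {π} ^ ℓ)) =
         Matrix.trace ((A⁻¹ : GL (Fin 2) (O ⧸ Ideal.span {π} ^ ℓ)) :
           Matrix (Fin 2) (Fin 2) (O ⧸ Ideal.span {π} ^ ℓ))) :=
  real_iff_det_trace_GL2_general O π hodd ℓ A
end

section
/- Let ℓ ≥ 1. The number of conjugacy classes of GL₂(𝔬_ℓ) consisting of real elements equals 1 + q^ℓ + 2·∑_{i=0}^{ℓ−1} q^i, and this also equals the number of conjugacy classes of GL₂(𝔬_ℓ) consisting of strongly real elements. -/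
/-!
Put `R = 𝔬_ℓ` and `p = π mod π^ℓ`, so that `R` is local with maximal ideal `(p)`, `p ^ ℓ = 0`
and `2 ∈ Rˣ`. Write `M = c + M₀` with `c = tr M / 2` and pull the largest power `p ^ j` out of
`M₀`; the traceless rest has a cyclic vector, so `M` is conjugate to `!![c, b; p ^ j, c]` with
`j ≤ ℓ` and `b ∈ (p ^ j)`, and these parameters are unique. The inverse of this normal form is
conjugate to the one with parameters `(δ⁻¹ c, j, δ⁻² b)`, `δ = det M`, so `M` is real iff
`δ = 1` or `M ~ !![0, 1; 1, 0]`. Determinant-one normal forms are inverted by the involution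
`diag(1, -1)` and `!![0, 1; 1, 0]` is an involution, so every real class is strongly real.
Counting the real normal forms: `q ^ ℓ` for `j = 0` (`c` is free), `2 q ^ (ℓ - j)` for
`1 ≤ j ≤ ℓ` (`b ∈ (p ^ j)` and `c = ±√(1 + p ^ j b)`, which exists by Hensel's lemma in `𝔬`),
and one more for `!![0, 1; 1, 0]`.
-/

open Matrix IsLocalRing

section StronglyReal

variable {G : Type*} [Group G]

def IsStronglyReal (g : G) : Prop := ∃ h : G, h ^ 2 = 1 ∧ h * g * h⁻¹ = g⁻¹

theorem IsConj.inv {a b : G} (h : IsConj a b) : IsConj a⁻¹ b⁻¹ := by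
  obtain ⟨c, rfl⟩ := isConj_iff.1 h
  exact isConj_iff.2 ⟨c, conj_inv.symm⟩

theorem IsConj.isConj_inv {a b : G} (h : IsConj a b) (ha : IsConj a a⁻¹) : IsConj b b⁻¹ :=
  (h.symm.trans ha).trans h.inv

theorem IsStronglyReal.isConj_inv {g : G} (h : IsStronglyReal g) : IsConj g g⁻¹ :=
  let ⟨h, _, hh⟩ := h
  isConj_iff.2 ⟨h, hh⟩

theorem IsStronglyReal.of_sq_eq_one {g : G} (hg : g ^ 2 = 1) : IsStronglyReal g :=
  ⟨1, one_pow 2, by rw [one_mul, inv_one, mul_one, eq_inv_iff_mul_eq_one, ← sq, hg]⟩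

theorem IsConj.isStronglyReal {a b : G} (h : IsConj a b) (ha : IsStronglyReal a) :
    IsStronglyReal b := by
  obtain ⟨c, rfl⟩ := isConj_iff.1 h
  obtain ⟨h, h2, hh⟩ := ha
  refine ⟨c * h * c⁻¹, by rw [conj_pow, h2, mul_one, mul_inv_cancel], ?_⟩
  rw [show (c * a * c⁻¹)⁻¹ = c * a⁻¹ * c⁻¹ from conj_inv, ← hh]
  group

theorem ConjClasses.forall_mem_carrier_mk_iff {P : G → Prop}
    (hP : ∀ {a b : G}, IsConj a b → P a → P b) (g : G) :
    (∀ a ∈ (ConjClasses.mk g).carrier, P a) ↔ P g :=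
  ⟨fun h ↦ h g ConjClasses.mem_carrier_mk, fun hg _ ha ↦
    hP (ConjClasses.mk_eq_mk_iff_isConj.1 (ConjClasses.mem_carrier_iff_mk_eq.1 ha)).symm hg⟩

end StronglyReal

theorem Units.isConj_coe_iff {M : Type*} [Monoid M] {u v : Mˣ} :
    IsConj (u : M) v ↔ IsConj u v :=
  ⟨fun ⟨c, hc⟩ ↦ ⟨toUnits c, Units.ext hc⟩, fun ⟨c, hc⟩ ↦ ⟨c, congrArg Units.val hc⟩⟩

theorem IsConj.exists_eq_units_conj {M : Type*} [Monoid M] {a b : M} (h : IsConj a b) :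
    ∃ g : Mˣ, b = g * a * ↑g⁻¹ :=
  let ⟨g, hg⟩ := h
  ⟨g, by rw [hg.eq, Units.mul_inv_cancel_right]⟩

theorem IsConj.smul_one_add_smul {R A : Type*} [CommSemiring R] [Semiring A] [Algebra R A]
    {a b : A} {c t : R} (h : IsConj a b) : IsConj (c • 1 + t • a) (c • 1 + t • b) := by
  obtain ⟨g, hg⟩ := h
  refine ⟨g, ?_⟩
  simp only [SemiconjBy, mul_add, add_mul, mul_smul_comm, smul_mul_assoc, mul_one, one_mul, hg.eq]

namespace Matrix

variable {n R : Type*} [Fintype n] [DecidableEq n] [CommRing R] {M N : Matrix n n R}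

theorem isConj_of_isUnit_det {g : Matrix n n R} (hg : IsUnit g.det) (h : g * M = N * g) :
    IsConj M N :=
  ⟨((isUnit_iff_isUnit_det g).2 hg).unit, h⟩

theorem trace_eq_of_isConj (h : IsConj M N) : M.trace = N.trace := by
  obtain ⟨g, rfl⟩ := h.exists_eq_units_conj
  rw [trace_units_conj]

theorem det_eq_of_isConj (h : IsConj M N) : M.det = N.det := by
  obtain ⟨g, rfl⟩ := h.exists_eq_units_conj
  rw [det_units_conj]

end Matrix

namespace IsLocalRing

variable {R : Type*} [CommRing R] [IsLocalRing R]

theorem isUnit_add_of_mem_maximalIdeal {a b : R} (ha : IsUnit a) (hb : b ∈ maximalIdeal R) :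
    IsUnit (a + b) := by
  by_contra h
  refine (mem_maximalIdeal a).1 ?_ ha
  simpa using sub_mem ((mem_maximalIdeal _).2 h) hb

theorem eq_or_eq_neg_of_sq_eq_sq (h2 : IsUnit (2 : R)) {c d : R} (hd : IsUnit d)
    (h : c ^ 2 = d ^ 2) : c = d ∨ c = -d := by
  have hprod : (c - d) * (c + d) = 0 := by linear_combination h
  have hsum : (c + d) + -(c - d) = 2 * d := by ring
  rcases isUnit_or_isUnit_of_isUnit_add (hsum ▸ h2.mul hd) with hu | hu
  · exact .inl (sub_eq_zero.1 (hu.mul_left_eq_zero.1 hprod))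
  · exact .inr (eq_neg_of_add_eq_zero_left (((IsUnit.neg_iff _).1 hu).mul_right_eq_zero.1 hprod))

theorem isUnit_two_of_odd_ringChar_s3 (hodd : Odd (ringChar (ResidueField R))) :
    IsUnit (2 : R) := by
  by_contra h
  have h0 := (residue_eq_zero_iff (2 : R)).2 ((mem_maximalIdeal _).2 h)
  rw [map_ofNat, ← Nat.cast_ofNat] at h0
  exact CharP.ringChar_ne_one ((Nat.coprime_two_right.2 hodd).eq_one_of_dvd (ringChar.dvd h0))

theorem isUnit_two_quotient_of_odd_ringChar (hodd : Odd (ringChar (ResidueField R)))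
    (I : Ideal R) : IsUnit (2 : R ⧸ I) :=
  map_ofNat (Ideal.Quotient.mk I) 2 ▸ (isUnit_two_of_odd_ringChar_s3 hodd).map _

variable {p : R}

theorem mem_maximalIdeal_iff_dvd (hp : maximalIdeal R = Ideal.span {p}) {x : R} :
    x ∈ maximalIdeal R ↔ p ∣ x := by
  rw [hp, Ideal.mem_span_singleton]

theorem not_isUnit_of_maximalIdeal_eq_span (hp : maximalIdeal R = Ideal.span {p}) :
    ¬ IsUnit p :=
  (mem_maximalIdeal p).1 ((mem_maximalIdeal_iff_dvd hp).2 dvd_rfl)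

theorem exists_eq_pow_smul (hp : maximalIdeal R = Ideal.span {p}) (ℓ : ℕ) {ι : Type*}
    (v : ι → R) : ∃ k ≤ ℓ, ∃ w : ι → R, v = p ^ k • w ∧ (k < ℓ → ∃ i, IsUnit (w i)) := by
  suffices h : ∀ m k, k + m = ℓ → ∀ w : ι → R, v = p ^ k • w →
      ∃ k ≤ ℓ, ∃ w : ι → R, v = p ^ k • w ∧ (k < ℓ → ∃ i, IsUnit (w i)) from
    h ℓ 0 (zero_add ℓ) v (by rw [pow_zero, one_smul])
  intro m
  induction m with
  | zero => exact fun k hk w hw ↦ ⟨k, by omega, w, hw, by omega⟩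
  | succ m ih =>
    intro k hk w hw
    by_cases hu : ∃ i, IsUnit (w i)
    · exact ⟨k, by omega, w, hw, fun _ ↦ hu⟩
    · choose w' hw' using fun i ↦
        (mem_maximalIdeal_iff_dvd hp).1 ((mem_maximalIdeal _).2 (not_exists.1 hu i))
      refine ih (k + 1) (by omega) w' ?_
      rw [hw, pow_succ, mul_smul]
      exact congrArg _ (funext hw')

theorem not_pow_succ_dvd_pow (hp : maximalIdeal R = Ideal.span {p}) {ℓ : ℕ}
    (hℓ : ∀ j, p ^ j = 0 ↔ ℓ ≤ j) {j : ℕ} (hj : j < ℓ) : ¬ p ^ (j + 1) ∣ p ^ j := by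
  rintro ⟨y, hy⟩
  have hunit : IsUnit (1 - p * y) := isUnit_one_sub_self_of_mem_nonunits _
    ((mem_maximalIdeal _).1 ((mem_maximalIdeal_iff_dvd hp).2 (dvd_mul_right p y)))
  have hzero : p ^ j * (1 - p * y) = 0 := by linear_combination hy
  exact hj.not_ge ((hℓ j).1 (hunit.mul_left_eq_zero.1 hzero))

theorem le_of_pow_dvd_pow (hp : maximalIdeal R = Ideal.span {p}) {ℓ : ℕ}
    (hℓ : ∀ j, p ^ j = 0 ↔ ℓ ≤ j) {i j : ℕ} (hi : i ≤ ℓ) (h : p ^ i ∣ p ^ j) : i ≤ j := by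
  by_contra! hji
  exact not_pow_succ_dvd_pow hp hℓ (hji.trans_le hi) ((pow_dvd_pow p hji).trans h)

theorem card_subtype_sq_eq_sq (h2 : IsUnit (2 : R)) {c : R} (hc : IsUnit c) :
    Nat.card {x : R // x ^ 2 = c ^ 2} = 2 := by
  refine Nat.card_eq_two_iff.2 ⟨⟨c, rfl⟩, ⟨-c, neg_sq c⟩, fun h ↦ ?_, ?_⟩
  · have h2c : 2 * c = 0 := by linear_combination congrArg Subtype.val h
    exact (h2.mul hc).ne_zero h2c
  · ext ⟨x, hx⟩
    simp only [Set.mem_insert_iff, Set.mem_singleton_iff, Set.mem_univ, iff_true, Subtype.ext_iff]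
    exact eq_or_eq_neg_of_sq_eq_sq h2 hc hx

end IsLocalRing

open Polynomial in
theorem HenselianRing.exists_sq_eq_one_add {O : Type*} [CommRing O] {I : Ideal O}
    [HenselianRing O I] (h2 : IsUnit (2 : O)) {x : O} (hx : x ∈ I) : ∃ c, c ^ 2 = 1 + x := by
  obtain ⟨c, hc, -⟩ := HenselianRing.is_henselian (X ^ 2 - C (1 + x))
    (monic_X_pow_sub_C _ two_ne_zero) 1 (by simpa using I.neg_mem hx)
    (by simpa [one_add_one_eq_two] using h2.map (Ideal.Quotient.mk I))
  exact ⟨c, by simpa [sub_eq_zero] using hc⟩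

theorem exists_sq_eq_one_add_of_mem_maximalIdeal_quotient {O : Type*} [CommRing O]
    [IsLocalRing O] [HenselianRing O (maximalIdeal O)] {I : Ideal O} [IsLocalRing (O ⧸ I)]
    (h2 : IsUnit (2 : O)) {x : O ⧸ I} (hx : x ∈ maximalIdeal (O ⧸ I)) :
    ∃ c, c ^ 2 = 1 + x := by
  obtain ⟨y, rfl⟩ := Ideal.Quotient.mk_surjective x
  have hy : y ∈ maximalIdeal O := fun hy ↦ hx (hy.map _)
  obtain ⟨c, hc⟩ := HenselianRing.exists_sq_eq_one_add h2 hy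
  exact ⟨Ideal.Quotient.mk I c, by rw [← map_pow, hc, map_add, map_one]⟩

namespace GLTwo

variable {R : Type*} [CommRing R] {p : R}

def normalForm (p c : R) (j : ℕ) (b : R) : Matrix (Fin 2) (Fin 2) R := !![c, b; p ^ j, c]

theorem det_normalForm (p c : R) (j : ℕ) (b : R) :
    (normalForm p c j b).det = c ^ 2 - p ^ j * b := by
  rw [normalForm, det_fin_two_of]; ring

theorem isConj_companion_of_isUnit [IsLocalRing R] (h2 : IsUnit (2 : R)) {α β γ : R}
    (h : IsUnit α ∨ IsUnit β ∨ IsUnit γ) :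
    IsConj !![α, β; γ, -α] !![0, α ^ 2 + β * γ; 1, 0] := by
  -- conjugate by `(v | A v)` for the cyclic vector `v = e₁`, `e₂`, resp. `e₁ + e₂`
  refine IsConj.symm ?_
  by_cases hγ : IsUnit γ
  · refine isConj_of_isUnit_det (g := !![1, α; 0, γ]) (by simpa [det_fin_two_of]) ?_
    ext i j; fin_cases i <;> fin_cases j <;> simp <;> ring
  by_cases hβ : IsUnit β
  · refine isConj_of_isUnit_det (g := !![0, β; 1, -α]) (by simpa [det_fin_two_of]) ?_
    ext i j; fin_cases i <;> fin_cases j <;> simp <;> ring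
  have hα : IsUnit α := by tauto
  have hdet : IsUnit (-(2 * α) + (γ - β)) := isUnit_add_of_mem_maximalIdeal (h2.mul hα).neg
    (sub_mem ((mem_maximalIdeal γ).2 hγ) ((mem_maximalIdeal β).2 hβ))
  refine isConj_of_isUnit_det (g := !![1, α + β; 1, γ - α])
    (by rw [det_fin_two_of]; convert hdet using 1; ring) ?_
  ext i j; fin_cases i <;> fin_cases j <;> simp <;> ring

theorem exists_isConj_normalForm [IsLocalRing R] (hp : maximalIdeal R = Ideal.span {p}) {ℓ : ℕ}
    (hℓ : p ^ ℓ = 0) (h2 : IsUnit (2 : R)) (M : Matrix (Fin 2) (Fin 2) R) :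
    ∃ c j b, j ≤ ℓ ∧ b ∈ Ideal.span {p ^ j} ∧ IsConj M (normalForm p c j b) := by
  obtain ⟨c, htr⟩ : ∃ c, 2 * c = M 0 0 + M 1 1 :=
    ⟨↑h2.unit⁻¹ * (M 0 0 + M 1 1), by rw [← mul_assoc, h2.mul_val_inv, one_mul]⟩
  obtain ⟨k, hk, w, hw, hunit⟩ := exists_eq_pow_smul hp ℓ ![M 0 0 - c, M 0 1, M 1 0]
  have hM : M = c • 1 + p ^ k • !![w 0, w 1; w 2, -w 0] := by
    have h00 : M 0 0 - c = p ^ k * w 0 := congrFun hw 0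
    have h01 : M 0 1 = p ^ k * w 1 := congrFun hw 1
    have h10 : M 1 0 = p ^ k * w 2 := congrFun hw 2
    ext i j; fin_cases i <;> fin_cases j <;> simp
    · linear_combination h00
    · linear_combination h01
    · linear_combination h10
    · linear_combination -htr - h00
  rcases hk.lt_or_eq with hk | rfl
  · obtain ⟨i, hi⟩ := hunit hk
    have hw : IsUnit (w 0) ∨ IsUnit (w 1) ∨ IsUnit (w 2) := by fin_cases i <;> tauto
    refine ⟨c, k, p ^ k * (w 0 ^ 2 + w 1 * w 2), hk.le,
      Ideal.mul_mem_right _ _ (Ideal.mem_span_singleton_self _), ?_⟩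
    convert (isConj_companion_of_isUnit h2 hw).smul_one_add_smul (c := c) (t := p ^ k)
    ext i j; fin_cases i <;> fin_cases j <;> simp [normalForm]
  · refine ⟨c, k, 0, le_rfl, zero_mem _, ?_⟩
    convert IsConj.refl M
    ext i j; fin_cases i <;> fin_cases j <;> simp [hM, normalForm, hℓ]

theorem eq_of_isConj_normalForm [IsLocalRing R] (hp : maximalIdeal R = Ideal.span {p}) {ℓ : ℕ}
    (hℓ : ∀ j, p ^ j = 0 ↔ ℓ ≤ j) (h2 : IsUnit (2 : R)) {c c' b b' : R} {j j' : ℕ}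
    (hj : j ≤ ℓ) (hj' : j' ≤ ℓ) (hb : b ∈ Ideal.span {p ^ j}) (hb' : b' ∈ Ideal.span {p ^ j'})
    (h : IsConj (normalForm p c j b) (normalForm p c' j' b')) : c = c' ∧ j = j' ∧ b = b' := by
  have hc : c = c' := by
    have htr := trace_eq_of_isConj h
    simp only [normalForm, trace_fin_two_of] at htr
    exact h2.mul_left_cancel (by linear_combination htr)
  subst hc
  obtain ⟨e, rfl⟩ := Ideal.mem_span_singleton.1 hb
  obtain ⟨e', rfl⟩ := Ideal.mem_span_singleton.1 hb'
  obtain ⟨g, hg⟩ := h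
  have hdet := isUnits_det_units g
  have E := hg.eq
  rw [eta_fin_two (g : Matrix (Fin 2) (Fin 2) R), normalForm, normalForm, mul_fin_two,
    mul_fin_two] at E
  rw [det_fin_two] at hdet
  simp only [EmbeddingLike.apply_eq_iff_eq, vecCons_inj, and_true] at E
  obtain ⟨⟨E00, E01⟩, E10, E11⟩ := E
  set a := (g : Matrix (Fin 2) (Fin 2) R) 0 0
  set β := (g : Matrix (Fin 2) (Fin 2) R) 0 1
  set γ := (g : Matrix (Fin 2) (Fin 2) R) 1 0
  set d := (g : Matrix (Fin 2) (Fin 2) R) 1 1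
  -- `p ^ j` and `p ^ j'` divide each other up to the unit `det g`
  have hjj' : p ^ j' * (a * d - β * γ) = p ^ j * (d ^ 2 - γ ^ 2 * e) := by
    linear_combination -d * E10 + γ * E11
  have hj'j : p ^ j * (a * d - β * γ) = p ^ j' * (a ^ 2 - γ ^ 2 * e') := by
    linear_combination a * E10 - γ * E00
  obtain rfl : j = j' := le_antisymm
    (le_of_pow_dvd_pow hp hℓ hj (hdet.dvd_mul_right.1 ⟨_, hjj'⟩))
    (le_of_pow_dvd_pow hp hℓ hj' (hdet.dvd_mul_right.1 ⟨_, hj'j⟩))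
  refine ⟨rfl, rfl, sub_eq_zero.1 (hdet.mul_right_eq_zero.1 ?_)⟩
  linear_combination a * (e * E10 + E01) - β * (E11 + E00)

theorem isConj_inv_normalForm {c b : R} {j : ℕ} (u : Rˣ) (hu : (u : R) = c ^ 2 - p ^ j * b) :
    IsConj (normalForm p c j b)⁻¹ (normalForm p (↑u⁻¹ * c) j (↑u⁻¹ ^ 2 * b)) := by
  have hinv : (normalForm p c j b)⁻¹ = (↑u⁻¹ : R) • !![c, -b; -p ^ j, c] := by
    rw [inv_def, det_normalForm, ← hu, Ring.inverse_unit, normalForm, adjugate_fin_two_of]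
  rw [hinv]
  refine isConj_of_isUnit_det (g := !![1, 0; 0, -↑u]) (by simp [det_fin_two_of]) ?_
  have hu1 := u.mul_inv
  ext i j; fin_cases i <;> fin_cases j <;> simp [normalForm]
  · linear_combination (-(↑u⁻¹ * b) : R) * hu1
  · linear_combination -c * hu1

theorem det_eq_one_or_of_isConj_inv [IsLocalRing R] (hp : maximalIdeal R = Ideal.span {p}) {ℓ : ℕ}
    (hℓ : ∀ j, p ^ j = 0 ↔ ℓ ≤ j) (h2 : IsUnit (2 : R)) {c b : R} {j : ℕ} (hj : j ≤ ℓ)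
    (hb : b ∈ Ideal.span {p ^ j}) (hdet : IsUnit (c ^ 2 - p ^ j * b))
    (h : IsConj (normalForm p c j b) (normalForm p c j b)⁻¹) :
    c ^ 2 - p ^ j * b = 1 ∨ (c = 0 ∧ j = 0 ∧ b = 1) := by
  obtain ⟨u, hu⟩ := hdet
  obtain ⟨hc, -, hb'⟩ := eq_of_isConj_normalForm hp hℓ h2 hj hj hb (Ideal.mul_mem_left _ _ hb)
    (h.trans (isConj_inv_normalForm u hu))
  have hu1 := u.mul_inv
  have hcu : c * (u - 1) = 0 := by linear_combination (u : R) * hc + c * hu1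
  have hbu : b * (u ^ 2 - 1) = 0 := by
    linear_combination (u : R) ^ 2 * hb' + b * (u * ↑u⁻¹ + 1) * hu1
  rw [← hu]
  by_cases hunit : IsUnit ((u : R) - 1)
  · have hc0 : c = 0 := hunit.mul_left_eq_zero.1 hcu
    have hj0 : j = 0 := by
      by_contra hj0
      refine (mem_maximalIdeal _).1 ?_ u.isUnit
      rw [show (u : R) = -(p ^ j * b) by rw [hu, hc0]; ring, mem_maximalIdeal_iff_dvd hp]
      exact dvd_neg.2 ((dvd_pow_self p hj0).mul_right b)
    subst hc0 hj0
    have hub : (u : R) = -b := by rw [hu]; ring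
    have hb1 : b ^ 2 = 1 ^ 2 := by
      have hbunit : IsUnit b := by simpa [hub] using u.isUnit
      have hbb : b * (b ^ 2 - 1) = 0 := by rw [hub] at hbu; linear_combination hbu
      linear_combination hbunit.mul_right_eq_zero.1 hbb
    rcases eq_or_eq_neg_of_sq_eq_sq h2 isUnit_one hb1 with rfl | hb1
    · exact .inr ⟨rfl, rfl, rfl⟩
    · rw [hub, hb1, neg_neg, sub_self] at hunit
      exact absurd hunit not_isUnit_zero
  · have hu2 : IsUnit ((u : R) + 1) := by
      convert isUnit_add_of_mem_maximalIdeal h2 ((mem_maximalIdeal _).2 hunit) using 1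
      ring
    have hbu' : b * (u - 1) = 0 := hu2.mul_left_eq_zero.1 (by linear_combination hbu)
    have huu : (u : R) * (u - 1) = 0 := by
      linear_combination ((u : R) - 1) * hu + c * hcu - p ^ j * hbu'
    exact .inl (sub_eq_zero.1 (u.isUnit.mul_right_eq_zero.1 huu))

theorem isStronglyReal_of_normalForm {U : GL (Fin 2) R} {c b : R} {j : ℕ}
    (hU : (U : Matrix (Fin 2) (Fin 2) R) = normalForm p c j b)
    (h : c ^ 2 - p ^ j * b = 1 ∨ (c = 0 ∧ j = 0 ∧ b = 1)) : IsStronglyReal U := by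
  rcases h with hdet | ⟨rfl, rfl, rfl⟩
  · have hD : !![(1 : R), 0; 0, -1] * !![1, 0; 0, -1] = 1 := by
      ext i j; fin_cases i <;> fin_cases j <;> simp
    let D : GL (Fin 2) R := ⟨_, _, hD, hD⟩
    have hDinv : D⁻¹ = D := inv_eq_of_mul_eq_one_right (Units.ext hD)
    refine ⟨D, Units.ext (by rw [sq, Units.val_mul]; exact hD), ?_⟩
    rw [hDinv]
    refine eq_inv_of_mul_eq_one_right (Units.ext ?_)
    simp only [Units.val_mul, Units.val_one, hU, D]
    ext i j; fin_cases i <;> fin_cases j <;> simp [normalForm] <;>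
      first | linear_combination hdet | ring
  · refine IsStronglyReal.of_sq_eq_one (Units.ext ?_)
    rw [sq, Units.val_mul, hU, Units.val_one]
    ext i j; fin_cases i <;> fin_cases j <;> simp [normalForm]

abbrev DetOneParams (p : R) (j : ℕ) : Type _ :=
  Σ b : Ideal.span {p ^ j}, {c : R // c ^ 2 - p ^ j * b = 1}

/-- The summand `Unit` stands for `normalForm p 0 0 1 = !![0, 1; 1, 0]`, of determinant `-1`. -/
abbrev RealParams (p : R) (ℓ : ℕ) : Type _ := Unit ⊕ Σ j : Fin (ℓ + 1), DetOneParams p j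

namespace RealParams

variable {ℓ : ℕ}

def matrix : RealParams p ℓ → Matrix (Fin 2) (Fin 2) R
  | .inl _ => normalForm p 0 0 1
  | .inr ⟨j, b, c⟩ => normalForm p c j b

theorem isUnit_det_matrix (i : RealParams p ℓ) : IsUnit i.matrix.det := by
  rcases i with _ | ⟨j, b, c, hdet⟩
  · simp [matrix, det_normalForm]
  · simp only [matrix, det_normalForm, hdet, isUnit_one]

noncomputable def toGL (i : RealParams p ℓ) : GL (Fin 2) R :=
  ((isUnit_iff_isUnit_det _).2 i.isUnit_det_matrix).unit

theorem toGL_val (i : RealParams p ℓ) : (i.toGL : Matrix (Fin 2) (Fin 2) R) = i.matrix :=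
  IsUnit.unit_spec _

theorem isStronglyReal_toGL (i : RealParams p ℓ) : IsStronglyReal i.toGL := by
  rcases i with _ | ⟨j, b, c, hdet⟩
  · exact isStronglyReal_of_normalForm (toGL_val _) (.inr ⟨rfl, rfl, rfl⟩)
  · exact isStronglyReal_of_normalForm (toGL_val _) (.inl hdet)

theorem eq_of_isConj_toGL [IsLocalRing R] (hp : maximalIdeal R = Ideal.span {p})
    (hℓ : ∀ j, p ^ j = 0 ↔ ℓ ≤ j) (h2 : IsUnit (2 : R)) {i i' : RealParams p ℓ}
    (h : IsConj i.toGL i'.toGL) : i = i' := by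
  rw [← Units.isConj_coe_iff, toGL_val, toGL_val] at h
  have hne : (0 : R) ^ 2 - p ^ 0 * 1 ≠ 1 := fun h ↦ h2.ne_zero (by linear_combination -h)
  rcases i with _ | ⟨j, ⟨b, hb⟩, c, hdet⟩ <;> rcases i' with _ | ⟨j', ⟨b', hb'⟩, c', hdet'⟩
  · rfl
  · exact absurd (by simpa only [matrix, det_normalForm, hdet'] using det_eq_of_isConj h) hne
  · exact absurd (by simpa only [matrix, det_normalForm, hdet] using (det_eq_of_isConj h).symm) hne
  · obtain ⟨rfl, hjj, rfl⟩ := eq_of_isConj_normalForm hp hℓ h2 (by omega) (by omega) hb hb' h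
    obtain rfl := Fin.ext hjj
    rfl

theorem exists_isConj_toGL [IsLocalRing R] (hp : maximalIdeal R = Ideal.span {p})
    (hℓ : ∀ j, p ^ j = 0 ↔ ℓ ≤ j) (h2 : IsUnit (2 : R)) {U : GL (Fin 2) R}
    (hU : IsConj U U⁻¹) :
    ∃ i : RealParams p ℓ, IsConj U i.toGL := by
  obtain ⟨c, j, b, hj, hb, hUN⟩ :=
    exists_isConj_normalForm hp ((hℓ ℓ).2 le_rfl) h2 (U : Matrix _ _ R)
  have hdet : IsUnit (normalForm p c j b).det := det_eq_of_isConj hUN ▸ isUnits_det_units U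
  set V : GL (Fin 2) R := ((isUnit_iff_isUnit_det _).2 hdet).unit
  have hV : (V : Matrix (Fin 2) (Fin 2) R) = normalForm p c j b := IsUnit.unit_spec _
  have hUV : IsConj U V := Units.isConj_coe_iff.1 (hV ▸ hUN)
  have hVinv : IsConj (normalForm p c j b) (normalForm p c j b)⁻¹ := by
    have := Units.isConj_coe_iff.2 (hUV.isConj_inv hU)
    rwa [coe_units_inv, hV] at this
  rw [det_normalForm] at hdet
  rcases det_eq_one_or_of_isConj_inv hp hℓ h2 hj hb hdet hVinv with hdet1 | ⟨rfl, rfl, rfl⟩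
  · refine ⟨.inr ⟨⟨j, by omega⟩, ⟨b, hb⟩, c, hdet1⟩, hUV.trans (Units.isConj_coe_iff.1 ?_)⟩
    rw [hV, toGL_val]
    rfl
  · refine ⟨.inl (), hUV.trans (Units.isConj_coe_iff.1 ?_)⟩
    rw [hV, toGL_val]
    rfl

end RealParams

theorem isStronglyReal_of_isConj_inv [IsLocalRing R] (hp : maximalIdeal R = Ideal.span {p})
    {ℓ : ℕ} (hℓ : ∀ j, p ^ j = 0 ↔ ℓ ≤ j) (h2 : IsUnit (2 : R)) {U : GL (Fin 2) R}
    (hU : IsConj U U⁻¹) : IsStronglyReal U :=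
  let ⟨i, hi⟩ := RealParams.exists_isConj_toGL hp hℓ h2 hU
  hi.symm.isStronglyReal i.isStronglyReal_toGL

theorem card_realClasses [IsLocalRing R] (hp : maximalIdeal R = Ideal.span {p}) {ℓ : ℕ}
    (hℓ : ∀ j, p ^ j = 0 ↔ ℓ ≤ j) (h2 : IsUnit (2 : R)) :
    Nat.card {c : ConjClasses (GL (Fin 2) R) // ∀ a ∈ c.carrier, IsConj a a⁻¹} =
      Nat.card (RealParams p ℓ) := by
  have hreal : ∀ {a b : GL (Fin 2) R}, IsConj a b → IsConj a a⁻¹ → IsConj b b⁻¹ :=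
    fun h ha ↦ h.isConj_inv ha
  refine (Nat.card_eq_of_bijective (fun i : RealParams p ℓ ↦ ⟨ConjClasses.mk i.toGL,
    (ConjClasses.forall_mem_carrier_mk_iff hreal _).2 i.isStronglyReal_toGL.isConj_inv⟩)
    ⟨fun i i' h ↦ ?_, fun ⟨c, hc⟩ ↦ ?_⟩).symm
  · exact RealParams.eq_of_isConj_toGL hp hℓ h2
      (ConjClasses.mk_eq_mk_iff_isConj.1 (congrArg Subtype.val h))
  · obtain ⟨U, rfl⟩ := c.exists_rep
    obtain ⟨i, hi⟩ := RealParams.exists_isConj_toGL hp hℓ h2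
      ((ConjClasses.forall_mem_carrier_mk_iff hreal U).1 hc)
    exact ⟨i, Subtype.ext (ConjClasses.mk_eq_mk_iff_isConj.2 hi.symm)⟩

theorem card_detOneParams_zero : Nat.card (DetOneParams p 0) = Nat.card R :=
  Nat.card_congr
    { toFun := fun x ↦ x.2
      invFun := fun c ↦ ⟨⟨c ^ 2 - 1, by simp⟩, c, by ring⟩
      left_inv := by
        rintro ⟨⟨b, hb⟩, c, hc⟩
        obtain rfl : b = c ^ 2 - 1 := by linear_combination -hc
        rfl
      right_inv := fun _ ↦ rfl }

theorem card_detOneParams [IsLocalRing R] [Finite R] (hp : maximalIdeal R = Ideal.span {p})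
    (h2 : IsUnit (2 : R)) (hsq : ∀ x ∈ maximalIdeal R, ∃ c, c ^ 2 = 1 + x) {j : ℕ}
    (hj : j ≠ 0) : Nat.card (DetOneParams p j) = 2 * Nat.card (Ideal.span {p ^ j}) := by
  have hfiber (b : Ideal.span {p ^ j}) : Nat.card {c : R // c ^ 2 - p ^ j * b = 1} = 2 := by
    have hb : p ^ j * (b : R) ∈ maximalIdeal R :=
      (mem_maximalIdeal_iff_dvd hp).2 ((dvd_pow_self p hj).mul_right _)
    obtain ⟨c, hc⟩ := hsq _ hb
    have hcu : IsUnit c := (isUnit_pow_iff two_ne_zero).1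
      (hc ▸ isUnit_add_of_mem_maximalIdeal isUnit_one hb)
    refine (Nat.card_congr (Equiv.subtypeEquivRight fun x ↦ ?_)).trans
      (card_subtype_sq_eq_sq h2 hcu)
    rw [hc]
    constructor <;> intro h <;> linear_combination h
  classical
  have := Fintype.ofFinite (Ideal.span {p ^ j})
  rw [Nat.card_sigma, Finset.sum_congr rfl fun b _ ↦ hfiber b, Finset.sum_const,
    Finset.card_univ, smul_eq_mul, mul_comm, Nat.card_eq_fintype_card]

theorem card_realParams [IsLocalRing R] [Finite R] (hp : maximalIdeal R = Ideal.span {p})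
    (h2 : IsUnit (2 : R)) (hsq : ∀ x ∈ maximalIdeal R, ∃ c, c ^ 2 = 1 + x) (ℓ : ℕ) :
    Nat.card (RealParams p ℓ) =
      1 + Nat.card R + 2 * ∑ j ∈ Finset.range ℓ, Nat.card (Ideal.span {p ^ (j + 1)}) := by
  rw [Nat.card_sum, Nat.card_unique, Nat.card_sigma, Fin.sum_univ_succ, Fin.val_zero,
    card_detOneParams_zero, Finset.mul_sum, ← Fin.sum_univ_eq_sum_range, add_assoc]
  simp only [Fin.val_succ, card_detOneParams hp h2 hsq (Nat.succ_ne_zero _)]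

end GLTwo

section DVR

variable {O : Type*} [CommRing O] [IsDomain O] [IsDiscreteValuationRing O] {π : O}

theorem ne_zero_of_maximalIdeal_eq_span (hπ : maximalIdeal O = Ideal.span {π}) : π ≠ 0 := by
  rintro rfl
  exact IsDiscreteValuationRing.not_a_field O (by rw [hπ, Ideal.span_singleton_eq_bot])

theorem pow_mk_eq_zero_iff (hπ : maximalIdeal O = Ideal.span {π}) (ℓ j : ℕ) :
    (Ideal.Quotient.mk (Ideal.span {π} ^ ℓ) π) ^ j = 0 ↔ ℓ ≤ j := by
  rw [← map_pow, Ideal.Quotient.eq_zero_iff_mem, Ideal.span_singleton_pow,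
    Ideal.mem_span_singleton, pow_dvd_pow_iff (ne_zero_of_maximalIdeal_eq_span hπ)
    (not_isUnit_of_maximalIdeal_eq_span hπ)]

theorem card_quotient_span_pow [Finite (ResidueField O)] (hπ : maximalIdeal O = Ideal.span {π})
    (m : ℕ) :
    Nat.card (O ⧸ Ideal.span {π} ^ m) = Nat.card (ResidueField O) ^ m := by
  have : (Ideal.span {π}).IsPrime := hπ ▸ (maximalIdeal.isMaximal O).isPrime
  rw [← Submodule.cardQuot_apply, cardQuot_pow_of_prime, Submodule.cardQuot_apply, ← hπ]
  · rfl
  · rw [Ne, Ideal.span_singleton_eq_bot]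
    exact ne_zero_of_maximalIdeal_eq_span hπ

theorem card_span_mk_pow [Finite (ResidueField O)] (hπ : maximalIdeal O = Ideal.span {π})
    {j ℓ : ℕ} (hj : j ≤ ℓ) :
    Nat.card (Ideal.span {(Ideal.Quotient.mk (Ideal.span {π} ^ ℓ) π) ^ j}) =
      Nat.card (ResidueField O) ^ (ℓ - j) := by
  have hI : Ideal.span {(Ideal.Quotient.mk (Ideal.span {π} ^ ℓ) π) ^ j} =
      (Ideal.span {π} ^ j).map (Ideal.Quotient.mk _) := by
    rw [Ideal.map_pow, Ideal.map_span, Set.image_singleton, Ideal.span_singleton_pow (_ : O ⧸ _)]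
  have hcard := Submodule.card_eq_card_quotient_mul_card
    (Ideal.span {(Ideal.Quotient.mk (Ideal.span {π} ^ ℓ) π) ^ j})
  rw [hI, Nat.card_congr (DoubleQuot.quotQuotEquivQuotSup _ _).toEquiv,
    sup_eq_right.2 (Ideal.pow_le_pow_right hj), card_quotient_span_pow hπ,
    card_quotient_span_pow hπ, ← pow_sub_mul_pow _ hj] at hcard
  rw [hI]
  exact (Nat.eq_of_mul_eq_mul_right (pow_pos Nat.card_pos _) hcard).symm

theorem isLocalRing_quotient_span_pow (hπ : maximalIdeal O = Ideal.span {π}) {ℓ : ℕ}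
    (hℓ : ℓ ≠ 0) : IsLocalRing (O ⧸ Ideal.span {π} ^ ℓ) :=
  have : Nontrivial (O ⧸ Ideal.span {π} ^ ℓ) := Ideal.Quotient.nontrivial_iff.2 <|
    ne_top_of_le_ne_top (hπ ▸ (maximalIdeal.isMaximal O).ne_top) (Ideal.pow_le_self hℓ)
  .of_surjective' _ Ideal.Quotient.mk_surjective

theorem maximalIdeal_quotient_span_pow (hπ : maximalIdeal O = Ideal.span {π}) {ℓ : ℕ}
    [IsLocalRing (O ⧸ Ideal.span {π} ^ ℓ)] :
    maximalIdeal (O ⧸ Ideal.span {π} ^ ℓ) =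
      Ideal.span {Ideal.Quotient.mk (Ideal.span {π} ^ ℓ) π} := by
  rw [← map_maximalIdeal_of_surjective _ Ideal.Quotient.mk_surjective, hπ, Ideal.map_span,
    Set.image_singleton]

theorem card_realParams_quotient_span_pow [IsAdicComplete (maximalIdeal O) O]
    [Finite (ResidueField O)] (hπ : maximalIdeal O = Ideal.span {π})
    (hodd : Odd (ringChar (ResidueField O))) {ℓ : ℕ} (hℓ : ℓ ≠ 0) :
    Nat.card (GLTwo.RealParams (Ideal.Quotient.mk (Ideal.span {π} ^ ℓ) π) ℓ) =
      1 + Nat.card (ResidueField O) ^ ℓ +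
        2 * ∑ i ∈ Finset.range ℓ, Nat.card (ResidueField O) ^ i := by
  have := isLocalRing_quotient_span_pow hπ hℓ
  have : Finite (O ⧸ Ideal.span {π} ^ ℓ) :=
    Nat.finite_of_card_ne_zero (by simp [card_quotient_span_pow hπ, Nat.card_pos.ne'])
  rw [GLTwo.card_realParams (maximalIdeal_quotient_span_pow hπ)
    (isUnit_two_quotient_of_odd_ringChar hodd _) (fun _ ↦
      exists_sq_eq_one_add_of_mem_maximalIdeal_quotient (isUnit_two_of_odd_ringChar_s3 hodd)),
    card_quotient_span_pow hπ,
    Finset.sum_congr rfl fun j hj ↦ card_span_mk_pow hπ (Finset.mem_range.1 hj),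
    ← Finset.sum_range_reflect]
  refine congrArg (_ + 2 * ·) (Finset.sum_congr rfl fun j hj ↦ ?_)
  have := Finset.mem_range.1 hj
  congr 1
  omega

end DVR

open GLTwo in
theorem count_real_strongly_real_classes_GL2
    (O : Type) [CommRing O] [IsDomain O] [IsDiscreteValuationRing O]
    [IsAdicComplete (IsLocalRing.maximalIdeal O) O]
    (π : O) (hπ : IsLocalRing.maximalIdeal O = Ideal.span {π})
    [Finite (IsLocalRing.ResidueField O)]
    (hodd : Odd (ringChar (IsLocalRing.ResidueField O)))
    (q : ℕ) (hq : Nat.card (IsLocalRing.ResidueField O) = q)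
    (ℓ : ℕ) (hℓ : 1 ≤ ℓ) :
    Nat.card {c : ConjClasses (GL (Fin 2) (O ⧸ Ideal.span {π} ^ ℓ)) //
        ∀ a ∈ c.carrier, IsConj a a⁻¹} =
      1 + q ^ ℓ + 2 * ∑ i ∈ Finset.range ℓ, q ^ i ∧
    Nat.card {c : ConjClasses (GL (Fin 2) (O ⧸ Ideal.span {π} ^ ℓ)) //
        ∀ a ∈ c.carrier, ∃ h, h ^ 2 = 1 ∧ h * a * h⁻¹ = a⁻¹} =
      1 + q ^ ℓ + 2 * ∑ i ∈ Finset.range ℓ, q ^ i := by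
  subst hq
  have := isLocalRing_quotient_span_pow hπ (Nat.one_le_iff_ne_zero.1 hℓ)
  have hp := maximalIdeal_quotient_span_pow hπ (ℓ := ℓ)
  have hpℓ := pow_mk_eq_zero_iff hπ ℓ
  have h2 := isUnit_two_quotient_of_odd_ringChar hodd (Ideal.span {π} ^ ℓ)
  have hreal := (card_realClasses hp hpℓ h2).trans
    (card_realParams_quotient_span_pow hπ hodd (Nat.one_le_iff_ne_zero.1 hℓ))
  refine ⟨hreal, hreal ▸ Nat.card_congr (Equiv.subtypeEquivRight fun c ↦ ?_)⟩
  exact forall₂_congr fun a _ ↦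
    ⟨IsStronglyReal.isConj_inv, isStronglyReal_of_isConj_inv hp hpℓ h2⟩
end

section
/- Let ℓ ≥ 1. Every matrix A = [[x, π^{i+1}βy],[π^i y, x]] ∈ GU₂(𝔬_ℓ) with 0 ≤ i ≤ ℓ−1, β ∈ 𝔬_ℓ, x ∈ 𝔬_ℓ^× and y ∈ 𝔒_ℓ^× satisfying x² + π^{2i+1}β·y·y° = 1 = x² − π^{2i+1}β·y² and π^i(x·y° + x°·y) = 0 is real in GU₂(𝔬_ℓ) but is not strongly real: no h ∈ GU₂(𝔬_ℓ) with h² = 1 satisfies h A h⁻¹ = A⁻¹. -/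
open Matrix

/-- The antidiagonal permutation matrix `W`. -/
def Wmat (OO : Type) [CommRing OO] : Matrix (Fin 2) (Fin 2) OO := !![0, 1; 1, 0]

lemma Wmat_det_isUnit (OO : Type) [CommRing OO] : IsUnit (Wmat OO).det := by
  have : (Wmat OO).det = -1 := by simp [Wmat, Matrix.det_fin_two_of]
  rw [this]; exact isUnit_one.neg

/-- `A* = W (A°)ᵀ W⁻¹`, where `°` is applied entrywise. -/
noncomputable def mstar {OO : Type} [CommRing OO] (c : OO →+* OO)
    (M : Matrix (Fin 2) (Fin 2) OO) : Matrix (Fin 2) (Fin 2) OO :=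
  Wmat OO * (M.map c)ᵀ * (Wmat OO)⁻¹

lemma mstar_mul {OO : Type} [CommRing OO] (c : OO →+* OO)
    (M N : Matrix (Fin 2) (Fin 2) OO) :
    mstar c (M * N) = mstar c N * mstar c M := by
  unfold mstar
  rw [Matrix.map_mul, Matrix.transpose_mul]
  simp only [mul_assoc]
  rw [Matrix.nonsing_inv_mul_cancel_left _ _ (Wmat_det_isUnit OO)]

lemma mstar_one {OO : Type} [CommRing OO] (c : OO →+* OO) :
    mstar c (1 : Matrix (Fin 2) (Fin 2) OO) = 1 := by
  unfold mstar
  rw [Matrix.map_one c c.map_zero c.map_one, Matrix.transpose_one, mul_one,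
    Matrix.mul_nonsing_inv _ (Wmat_det_isUnit OO)]

lemma gu_one {OO : Type} [CommRing OO] (c : OO →+* OO) :
    mstar c ((1 : GL (Fin 2) OO) : Matrix (Fin 2) (Fin 2) OO) *
      ((1 : GL (Fin 2) OO) : Matrix (Fin 2) (Fin 2) OO) = 1 := by
  rw [Units.val_one, mstar_one, one_mul]

lemma gu_mul {OO : Type} [CommRing OO] (c : OO →+* OO) (a b : GL (Fin 2) OO)
    (ha : mstar c ↑a * (↑a : Matrix (Fin 2) (Fin 2) OO) = 1)
    (hb : mstar c ↑b * (↑b : Matrix (Fin 2) (Fin 2) OO) = 1) :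
    mstar c (↑(a * b)) * (↑(a * b) : Matrix (Fin 2) (Fin 2) OO) = 1 := by
  rw [Units.val_mul]
  rw [mstar_mul]
  rw [mul_assoc]
  rw [← mul_assoc (mstar c (↑a : Matrix (Fin 2) (Fin 2) OO))
    (↑a : Matrix (Fin 2) (Fin 2) OO) (↑b : Matrix (Fin 2) (Fin 2) OO)]
  rw [ha, one_mul]
  exact hb

lemma gu_inv {OO : Type} [CommRing OO] (c : OO →+* OO) (a : GL (Fin 2) OO)
    (ha : mstar c ↑a * (↑a : Matrix (Fin 2) (Fin 2) OO) = 1) :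
    mstar c (↑a⁻¹) * (↑a⁻¹ : Matrix (Fin 2) (Fin 2) OO) = 1 := by
  have h1 : mstar c (↑a : Matrix (Fin 2) (Fin 2) OO) = ↑a⁻¹ := by
    calc mstar c (↑a : Matrix (Fin 2) (Fin 2) OO)
        = mstar c (↑a : Matrix (Fin 2) (Fin 2) OO) *
            ((↑a : Matrix (Fin 2) (Fin 2) OO) * (↑a⁻¹ : Matrix (Fin 2) (Fin 2) OO)) := by
          rw [a.mul_inv, mul_one]
      _ = mstar c (↑a : Matrix (Fin 2) (Fin 2) OO) * (↑a : Matrix (Fin 2) (Fin 2) OO) *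
            (↑a⁻¹ : Matrix (Fin 2) (Fin 2) OO) := by rw [mul_assoc]
      _ = ↑a⁻¹ := by rw [ha, one_mul]
  calc mstar c (↑a⁻¹ : Matrix (Fin 2) (Fin 2) OO) * (↑a⁻¹ : Matrix (Fin 2) (Fin 2) OO)
      = mstar c (↑a⁻¹ : Matrix (Fin 2) (Fin 2) OO) *
          mstar c (↑a : Matrix (Fin 2) (Fin 2) OO) := by rw [h1]
    _ = mstar c ((↑a : Matrix (Fin 2) (Fin 2) OO) * (↑a⁻¹ : Matrix (Fin 2) (Fin 2) OO)) :=
        (mstar_mul c _ _).symm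
    _ = 1 := by rw [a.mul_inv, mstar_one]

/-- The unitary group `GU₂(𝔬_ℓ)` as a subgroup of `GL₂(𝔒_ℓ)`, with respect to the
entrywise involution `c`. -/
noncomputable def GU2 (OO : Type) [CommRing OO] (c : OO →+* OO) :
    Subgroup (GL (Fin 2) OO) where
  carrier := {A | mstar c (A : Matrix (Fin 2) (Fin 2) OO) * (A : Matrix (Fin 2) (Fin 2) OO) = 1}
  one_mem' := gu_one c
  mul_mem' := fun ha hb => gu_mul c _ _ ha hb
  inv_mem' := fun ha => gu_inv c _ ha

/-
Conjugation by `diag(p, -p)` with `p p° = -1` inverts every `[[x, b], [c, x]]` of determinant one;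
such a `p` exists because `X² - u Y² = -1` is solvable over the finite residue field and Hensel's
lemma lifts the solution. An involution `h ∈ GU₂` inverting `A` satisfies `h* = h⁻¹ = h`, so its
off-diagonal entries lie in `𝔬_ℓ` and `h₂₂ = h₁₁°`. Comparing entries of `h A = A⁻¹ h` makes the
rational part of `h₁₁` and the entry `h₁₂` vanish modulo `π`, and then the `(1,1)` entry of
`h² = 1` reads `u b² ≡ 1 (mod π)` for the `ε`-coordinate `b` of `h₁₁`: `u` would be a square.
-/

open IsLocalRing

open Polynomial in
theorem exists_sq_sub_mul_sq_eq_neg_one_of_finite {K : Type*} [Field K] [Finite K]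
    (hK : ringChar K ≠ 2) {u : K} (hu : u ≠ 0) : ∃ a b : K, a ^ 2 - u * b ^ 2 = -1 := by
  have := Fintype.ofFinite K
  obtain ⟨a, b, hab⟩ := FiniteField.exists_root_sum_quadratic
    (f := X ^ 2 + C 1) (g := C (-u) * X ^ 2) (degree_X_pow_add_C two_pos 1)
    (degree_C_mul_X_pow 2 (neg_ne_zero.mpr hu)) (FiniteField.odd_card_of_char_ne_two hK)
  refine ⟨a, b, ?_⟩
  simp only [eval_add, eval_mul, eval_pow, eval_C, eval_X] at hab
  linear_combination hab

theorem isUnit_two_of_ringChar_residueField_ne_two {O : Type*} [CommRing O] [IsLocalRing O]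
    (h : ringChar (ResidueField O) ≠ 2) : IsUnit (2 : O) :=
  (residue_ne_zero_iff_isUnit 2).mp (by rw [map_ofNat]; exact Ring.two_ne_zero h)

open Polynomial in
theorem exists_sq_sub_mul_sq_eq_neg_one {O : Type*} [CommRing O] [IsLocalRing O]
    [HenselianRing O (maximalIdeal O)] [Finite (ResidueField O)]
    (hchar : ringChar (ResidueField O) ≠ 2) {u : O} (hu : ¬ ∃ t, t ^ 2 = residue O u) :
    ∃ a b : O, a ^ 2 - u * b ^ 2 = -1 := by
  have hu₀ : residue O u ≠ 0 := fun h => hu ⟨0, by rw [h]; ring⟩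
  obtain ⟨a₀, b₀, hab₀⟩ := exists_sq_sub_mul_sq_eq_neg_one_of_finite hchar hu₀
  -- `a₀ = 0` would make `u = b₀⁻²` a square.
  have ha₀ : a₀ ≠ 0 := by
    rintro rfl
    have hb₀ : b₀ ≠ 0 := by rintro rfl; simp at hab₀
    exact hu ⟨b₀⁻¹, by field_simp; linear_combination hab₀⟩
  obtain ⟨a₁, rfl⟩ := residue_surjective a₀
  obtain ⟨b, rfl⟩ := residue_surjective b₀
  have hroot : eval a₁ (X ^ 2 - C (u * b ^ 2 - 1)) ∈ maximalIdeal O := by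
    rw [← residue_eq_zero_iff, eval_sub, eval_pow, eval_X, eval_C]
    simp only [map_sub, map_mul, map_pow, map_one]
    linear_combination hab₀
  have hsimple : IsUnit (residue O (eval a₁ (derivative (X ^ 2 - C (u * b ^ 2 - 1))))) := by
    rw [derivative_sub, derivative_X_sq, derivative_C, sub_zero, eval_mul, eval_C, eval_X,
      map_mul, map_ofNat]
    exact (Ring.two_ne_zero hchar).isUnit.mul ha₀.isUnit
  obtain ⟨a, ha, -⟩ := HenselianRing.is_henselian (I := maximalIdeal O) _
    (monic_X_pow_sub_C _ two_ne_zero) a₁ hroot hsimple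
  refine ⟨a, b, ?_⟩
  simp only [IsRoot, eval_sub, eval_pow, eval_X, eval_C] at ha
  linear_combination ha

theorem mem_span_of_pow_mul_mem_span_pow {O : Type*} [CommRing O] [IsDomain O] {π z : O}
    (hπ : π ≠ 0) {i ℓ : ℕ} (hi : i < ℓ) (h : π ^ i * z ∈ Ideal.span {π} ^ ℓ) :
    z ∈ Ideal.span {π} := by
  rw [Ideal.span_singleton_pow, Ideal.mem_span_singleton, ← Nat.add_sub_cancel' hi.le, pow_add,
    mul_dvd_mul_iff_left (pow_ne_zero _ hπ)] at h
  exact Ideal.mem_span_singleton.mpr ((dvd_pow_self π (by omega)).trans h)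

theorem exists_sq_eq_residue_of_quotient_eq {O : Type*} [CommRing O] [IsDomain O] [IsLocalRing O]
    {π : O} (hmax : maximalIdeal O = Ideal.span {π}) (hπ : π ≠ 0) {i ℓ : ℕ} (hi : i < ℓ)
    {u : O} {a b c d β : O ⧸ Ideal.span {π} ^ ℓ}
    (ha : Ideal.Quotient.mk _ π ^ i * a = 0)
    (hc : Ideal.Quotient.mk _ π ^ i * (c + Ideal.Quotient.mk _ π * β * d) = 0)
    (h : a ^ 2 + Ideal.Quotient.mk _ u * b ^ 2 + c * d = 1) :
    ∃ t, t ^ 2 = residue O u := by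
  obtain ⟨a, rfl⟩ := Ideal.Quotient.mk_surjective a
  obtain ⟨b, rfl⟩ := Ideal.Quotient.mk_surjective b
  obtain ⟨c, rfl⟩ := Ideal.Quotient.mk_surjective c
  obtain ⟨d, rfl⟩ := Ideal.Quotient.mk_surjective d
  obtain ⟨β, rfl⟩ := Ideal.Quotient.mk_surjective β
  simp only [← map_pow, ← map_mul, ← map_add, ← map_one (Ideal.Quotient.mk _),
    Ideal.Quotient.eq_zero_iff_mem, Ideal.Quotient.eq] at ha hc h
  have hres : ∀ z, z ∈ Ideal.span {π} → residue O z = 0 := fun z hz =>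
    (residue_eq_zero_iff z).mpr (hmax ▸ hz)
  have ha₀ := hres _ (mem_span_of_pow_mul_mem_span_pow hπ hi ha)
  have hc₀ := hres _ (mem_span_of_pow_mul_mem_span_pow hπ hi hc)
  have hπ₀ := hres _ (Ideal.mem_span_singleton_self π)
  have h₀ := hres _ (Ideal.pow_le_self (by omega) h)
  simp only [map_add, map_mul, hπ₀, zero_mul, add_zero] at hc₀
  simp only [map_add, map_sub, map_mul, map_pow, map_one, ha₀, hc₀] at h₀
  have hb : residue O b ≠ 0 := by rintro hb; simp [hb] at h₀
  exact ⟨(residue O b)⁻¹, by field_simp; linear_combination -h₀⟩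

section QuadraticExtension

variable {R OO : Type*} [CommRing R] [CommRing OO] [Algebra R OO] {ε : OO}

theorem algebraMap_add_mul_inj
    (hbasis : ∀ z : OO, ∃! xy : R × R, z = algebraMap R OO xy.1 + algebraMap R OO xy.2 * ε)
    {a b a' b' : R}
    (h : algebraMap R OO a + algebraMap R OO b * ε = algebraMap R OO a' + algebraMap R OO b' * ε) :
    a = a' ∧ b = b' := by
  obtain ⟨_, -, huniq⟩ := hbasis (algebraMap R OO a + algebraMap R OO b * ε)
  exact Prod.mk.inj ((huniq (a, b) rfl).trans (huniq (a', b') h).symm)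

theorem algebraMap_injective_of_basis
    (hbasis : ∀ z : OO, ∃! xy : R × R, z = algebraMap R OO xy.1 + algebraMap R OO xy.2 * ε) :
    Function.Injective (algebraMap R OO) := fun a a' h =>
  (algebraMap_add_mul_inj (b := 0) (b' := 0) hbasis (by rw [h])).1

theorem conj_algebraMap_add_mul (σ : OO ≃ₐ[R] OO) (hσ : σ ε = -ε) (a b : R) :
    σ (algebraMap R OO a + algebraMap R OO b * ε) = algebraMap R OO a - algebraMap R OO b * ε := by
  rw [map_add, map_mul, σ.commutes, σ.commutes, hσ, mul_neg, sub_eq_add_neg]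

theorem algebraMap_add_mul_mul_conj (σ : OO ≃ₐ[R] OO) (hσ : σ ε = -ε) {e : R}
    (hε : ε ^ 2 = algebraMap R OO e) (a b : R) :
    (algebraMap R OO a + algebraMap R OO b * ε) * σ (algebraMap R OO a + algebraMap R OO b * ε) =
      algebraMap R OO (a ^ 2 - e * b ^ 2) := by
  rw [conj_algebraMap_add_mul σ hσ, map_sub, map_mul, map_pow, map_pow]
  linear_combination (-algebraMap R OO b ^ 2) * hε

theorem exists_algebraMap_eq_of_conj_eq
    (hbasis : ∀ z : OO, ∃! xy : R × R, z = algebraMap R OO xy.1 + algebraMap R OO xy.2 * ε)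
    (σ : OO ≃ₐ[R] OO) (hσ : σ ε = -ε) (h2 : IsUnit (2 : R)) {z : OO} (hz : σ z = z) :
    ∃ r, algebraMap R OO r = z := by
  obtain ⟨⟨a, b⟩, rfl, -⟩ := hbasis z
  rw [conj_algebraMap_add_mul σ hσ] at hz
  have hb : -b = b := (algebraMap_add_mul_inj hbasis (by rw [map_neg]; linear_combination hz)).2
  have hb₀ : b = 0 := h2.mul_right_eq_zero.mp (by linear_combination -hb)
  exact ⟨a, by rw [hb₀, map_zero, zero_mul, add_zero]⟩

theorem exists_coords_of_entries
    (hbasis : ∀ z : OO, ∃! xy : R × R, z = algebraMap R OO xy.1 + algebraMap R OO xy.2 * ε)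
    (σ : OO ≃ₐ[R] OO) (hσ : σ ε = -ε) {e : R} (hε : ε ^ 2 = algebraMap R OO e)
    (h2 : IsUnit (2 : R)) {ϖ β : R} {i : ℕ} {p q r : OO} (hq : σ q = q) (hr : σ r = r)
    (hp : algebraMap R OO ϖ ^ i * (p + σ p) = 0)
    (hqr : algebraMap R OO ϖ ^ i * (q + algebraMap R OO ϖ * algebraMap R OO β * r) = 0)
    (hpqr : p ^ 2 + q * r = 1) :
    ∃ a b c d : R, ϖ ^ i * a = 0 ∧ ϖ ^ i * (c + ϖ * β * d) = 0 ∧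
      a ^ 2 + e * b ^ 2 + c * d = 1 := by
  have hinj := algebraMap_injective_of_basis hbasis
  obtain ⟨⟨a, b⟩, rfl, -⟩ := hbasis p
  obtain ⟨c, rfl⟩ := exists_algebraMap_eq_of_conj_eq hbasis σ hσ h2 hq
  obtain ⟨d, rfl⟩ := exists_algebraMap_eq_of_conj_eq hbasis σ hσ h2 hr
  rw [conj_algebraMap_add_mul σ hσ] at hp
  refine ⟨a, b, c, d, ?_, hinj ?_, ?_⟩
  · have h2a : ϖ ^ i * (2 * a) = 0 :=
      hinj (by simp only [map_mul, map_pow, map_ofNat, map_zero]; linear_combination hp)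
    exact h2.mul_right_eq_zero.mp (by linear_combination h2a)
  · simp only [map_mul, map_pow, map_add, map_zero]
    exact hqr
  · refine (algebraMap_add_mul_inj hbasis (b := 2 * a * b) (b' := 0) ?_).1
    simp only [map_add, map_mul, map_pow, map_one, map_zero, map_ofNat]
    linear_combination hpqr - algebraMap R OO b ^ 2 * hε

end QuadraticExtension

theorem mul_mul_eq_iff_conj_eq_inv {G : Type*} [Group G] {a h : G} :
    a * h * a = h ↔ h * a * h⁻¹ = a⁻¹ := by
  rw [mul_inv_eq_iff_eq_mul, mul_assoc, ← eq_inv_mul_iff_mul_eq]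

theorem fin_two_eq_iff {α : Type*} {a b c d a' b' c' d' : α} :
    !![a, b; c, d] = !![a', b'; c', d'] ↔ a = a' ∧ b = b' ∧ c = c' ∧ d = d' := by
  simp [and_assoc]

section Unitary

variable {S : Type} [CommRing S]

theorem Wmat_inv : (Wmat S)⁻¹ = Wmat S :=
  Matrix.inv_eq_right_inv (by simp [Wmat, Matrix.one_fin_two])

theorem mstar_fin_two (σ : S →+* S) (p q r s : S) :
    mstar σ !![p, q; r, s] = !![σ s, σ q; σ r, σ p] := by
  have hT : (!![p, q; r, s].map σ)ᵀ = !![σ p, σ r; σ q, σ s] := by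
    ext i j; fin_cases i <;> fin_cases j <;> rfl
  rw [mstar, Wmat_inv, Wmat, hT]
  simp

noncomputable def GU2.mk' (σ : S →+* S) (M : Matrix (Fin 2) (Fin 2) S) (hM : mstar σ M * M = 1) :
    GU2 S σ :=
  ⟨⟨M, mstar σ M, mul_eq_one_comm.mp hM, hM⟩, hM⟩

theorem fin_two_mul_diag_neg_mul {x b c p : S} (hdet : x ^ 2 - b * c = 1) :
    !![x, b; c, x] * !![p, 0; 0, -p] * !![x, b; c, x] = !![p, 0; 0, -p] := by
  rw [Matrix.mul_fin_two, Matrix.mul_fin_two, fin_two_eq_iff]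
  exact ⟨by linear_combination p * hdet, by ring, by ring, by linear_combination -p * hdet⟩

theorem isConj_inv_of_mul_conj_eq_neg_one (σ : S →+* S) (A : GU2 S σ) {x b c p : S}
    (hA : ((A : GL (Fin 2) S) : Matrix (Fin 2) (Fin 2) S) = !![x, b; c, x])
    (hdet : x ^ 2 - b * c = 1) (hp : p * σ p = -1) : IsConj A A⁻¹ := by
  have hH : mstar σ !![p, 0; 0, -p] * !![p, 0; 0, -p] = 1 := by
    rw [mstar_fin_two, map_neg, map_zero, Matrix.mul_fin_two, Matrix.one_fin_two, fin_two_eq_iff]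
    exact ⟨by linear_combination -hp, by ring, by ring, by linear_combination -hp⟩
  refine isConj_iff.mpr ⟨GU2.mk' σ _ hH, mul_mul_eq_iff_conj_eq_inv.mp ?_⟩
  ext : 2
  rw [Subgroup.coe_mul, Subgroup.coe_mul, Units.val_mul, Units.val_mul, hA]
  exact fin_two_mul_diag_neg_mul hdet

theorem entries_of_mul_mul_eq {x b c p q r s : S} (hdet : x ^ 2 - b * c = 1)
    (h : !![x, b; c, x] * !![p, q; r, s] * !![x, b; c, x] = !![p, q; r, s]) :
    c * (p + s) = 0 ∧ q * c + b * r = 0 := by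
  set A := !![x, b; c, x]
  have hadj : A.adjugate * A = 1 := by
    rw [Matrix.adjugate_mul, Matrix.det_fin_two_of, ← sq, hdet, one_smul]
  have hcomm : !![p, q; r, s] * A = A.adjugate * !![p, q; r, s] := by
    calc _ = A.adjugate * A * !![p, q; r, s] * A := by rw [hadj, one_mul]
      _ = A.adjugate * (A * !![p, q; r, s] * A) := by simp only [mul_assoc]
      _ = _ := by rw [h]
  rw [Matrix.adjugate_fin_two_of, Matrix.mul_fin_two, Matrix.mul_fin_two, fin_two_eq_iff] at hcomm
  obtain ⟨h₁₁, -, h₂₁, -⟩ := hcomm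
  exact ⟨by linear_combination h₂₁, by linear_combination h₁₁⟩

theorem exists_entries_of_conj_eq_inv (σ : S →+* S) {A h : GU2 S σ} {x b c : S}
    (hA : ((A : GL (Fin 2) S) : Matrix (Fin 2) (Fin 2) S) = !![x, b; c, x])
    (hdet : x ^ 2 - b * c = 1) (hsq : h ^ 2 = 1) (hconj : h * A * h⁻¹ = A⁻¹) :
    ∃ p q r : S, σ q = q ∧ σ r = r ∧ c * (p + σ p) = 0 ∧ q * c + b * r = 0 ∧
      p ^ 2 + q * r = 1 := by
  set M := ((h : GL (Fin 2) S) : Matrix (Fin 2) (Fin 2) S) with hMdef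
  have hM1 : M * M = 1 := by
    simpa [sq] using
      congrArg (fun g : GU2 S σ => ((g : GL (Fin 2) S) : Matrix (Fin 2) (Fin 2) S)) hsq
  have hstar : mstar σ M = M := left_inv_eq_right_inv h.2 hM1
  have hAMA := congrArg (fun g : GU2 S σ => ((g : GL (Fin 2) S) : Matrix (Fin 2) (Fin 2) S))
    (mul_mul_eq_iff_conj_eq_inv.mpr hconj)
  simp only [Subgroup.coe_mul, Units.val_mul, hA, ← hMdef] at hAMA
  obtain ⟨p, q, r, s, hM⟩ : ∃ p q r s, M = !![p, q; r, s] := ⟨_, _, _, _, Matrix.eta_fin_two M⟩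
  rw [hM, mstar_fin_two, fin_two_eq_iff] at hstar
  rw [hM, Matrix.mul_fin_two, Matrix.one_fin_two, fin_two_eq_iff] at hM1
  rw [hM] at hAMA
  obtain ⟨hc, hbr⟩ := entries_of_mul_mul_eq hdet hAMA
  exact ⟨p, q, r, hstar.2.1, hstar.2.2.1, by rw [hstar.2.2.2]; exact hc, hbr,
    by linear_combination hM1.1⟩

end Unitary

theorem type_d_real_not_strongly_real_GU2_general
    (O : Type) [CommRing O] [IsDomain O] [IsDiscreteValuationRing O]
    [IsAdicComplete (IsLocalRing.maximalIdeal O) O]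
    (π : O) (hπ : IsLocalRing.maximalIdeal O = Ideal.span {π})
    [Finite (IsLocalRing.ResidueField O)]
    (hodd : Odd (ringChar (IsLocalRing.ResidueField O)))
    (ℓ : ℕ) (hℓ : 1 ≤ ℓ)
    -- the unramified quadratic extension 𝔒_ℓ = 𝔬_ℓ[ε]
    (OO : Type) [CommRing OO] [Algebra (O ⧸ Ideal.span {π} ^ ℓ) OO]
    (ε : OO) (u : O)
    (hnonsq : ¬ ∃ t : IsLocalRing.ResidueField O, t ^ 2 = IsLocalRing.residue O u)
    (hε2 : ε ^ 2 = algebraMap (O ⧸ Ideal.span {π} ^ ℓ) OO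
      (Ideal.Quotient.mk (Ideal.span {π} ^ ℓ) u))
    (hbasis : ∀ z : OO, ∃! xy : (O ⧸ Ideal.span {π} ^ ℓ) × (O ⧸ Ideal.span {π} ^ ℓ),
      z = algebraMap (O ⧸ Ideal.span {π} ^ ℓ) OO xy.1 +
        algebraMap (O ⧸ Ideal.span {π} ^ ℓ) OO xy.2 * ε)
    -- the Galois involution `x ↦ x°`
    (cj : OO ≃ₐ[O ⧸ Ideal.span {π} ^ ℓ] OO) (hcj : cj ε = -ε)
    (i : ℕ) (hi : i ≤ ℓ - 1) (β : O ⧸ Ideal.span {π} ^ ℓ)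
    (x : (O ⧸ Ideal.span {π} ^ ℓ)ˣ) (y : OOˣ)
    (h2 : (algebraMap (O ⧸ Ideal.span {π} ^ ℓ) OO x) ^ 2 -
      (algebraMap (O ⧸ Ideal.span {π} ^ ℓ) OO
        (Ideal.Quotient.mk (Ideal.span {π} ^ ℓ) π)) ^ (2 * i + 1) *
      algebraMap (O ⧸ Ideal.span {π} ^ ℓ) OO β * (y : OO) ^ 2 = 1)
    (A : ↥(GU2 OO (cj : OO →+* OO)))
    (hA : ((A : GL (Fin 2) OO) : Matrix (Fin 2) (Fin 2) OO) =
      !![algebraMap (O ⧸ Ideal.span {π} ^ ℓ) OO x,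
         (algebraMap (O ⧸ Ideal.span {π} ^ ℓ) OO
           (Ideal.Quotient.mk (Ideal.span {π} ^ ℓ) π)) ^ (i + 1) *
           algebraMap (O ⧸ Ideal.span {π} ^ ℓ) OO β * ↑y;
         (algebraMap (O ⧸ Ideal.span {π} ^ ℓ) OO
           (Ideal.Quotient.mk (Ideal.span {π} ^ ℓ) π)) ^ i * ↑y,
         algebraMap (O ⧸ Ideal.span {π} ^ ℓ) OO x]) :
    IsConj A A⁻¹ ∧
      ¬ ∃ h : ↥(GU2 OO (cj : OO →+* OO)), h ^ 2 = 1 ∧ h * A * h⁻¹ = A⁻¹ := by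
  have hπ0 : π ≠ 0 := by
    rintro rfl
    exact IsDiscreteValuationRing.not_a_field O (by rw [hπ, Ideal.span_singleton_eq_bot.mpr rfl])
  have hchar : ringChar (ResidueField O) ≠ 2 := by
    rintro h
    rw [h] at hodd
    exact (by decide : ¬ Odd 2) hodd
  have htwo : IsUnit (2 : O ⧸ Ideal.span {π} ^ ℓ) := by
    simpa only [map_ofNat] using (isUnit_two_of_ringChar_residueField_ne_two hchar).map
      (Ideal.Quotient.mk (Ideal.span {π} ^ ℓ))
  refine ⟨?_, ?_⟩
  · obtain ⟨a, b, hab⟩ := exists_sq_sub_mul_sq_eq_neg_one hchar hnonsq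
    refine isConj_inv_of_mul_conj_eq_neg_one _ A hA (by linear_combination h2)
      (p := algebraMap _ OO (Ideal.Quotient.mk (Ideal.span {π} ^ ℓ) a) +
        algebraMap _ OO (Ideal.Quotient.mk (Ideal.span {π} ^ ℓ) b) * ε) ?_
    rw [RingHom.coe_coe, algebraMap_add_mul_mul_conj cj hcj hε2, ← map_pow, ← map_pow, ← map_mul,
      ← map_sub, hab, map_neg, map_one, map_neg, map_one]
  · rintro ⟨h, hsq, hconj⟩
    obtain ⟨p, q', r, hq, hr, hp, hqr, hpqr⟩ :=
      exists_entries_of_conj_eq_inv _ hA (by linear_combination h2) hsq hconj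
    rw [RingHom.coe_coe] at hp
    obtain ⟨a, b, c, d, ha, hc, habcd⟩ := exists_coords_of_entries hbasis cj hcj hε2 htwo
      (ϖ := Ideal.Quotient.mk _ π) (β := β) hq hr
      ((Units.mul_right_eq_zero y).mp (by linear_combination hp))
      ((Units.mul_right_eq_zero y).mp (by linear_combination hqr)) hpqr
    exact hnonsq (exists_sq_eq_residue_of_quotient_eq hπ hπ0 (by omega) ha hc habcd)

theorem type_d_real_not_strongly_real_GU2
    (O : Type) [CommRing O] [IsDomain O] [IsDiscreteValuationRing O]
    [IsAdicComplete (IsLocalRing.maximalIdeal O) O]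
    (π : O) (hπ : IsLocalRing.maximalIdeal O = Ideal.span {π})
    [Finite (IsLocalRing.ResidueField O)]
    (hodd : Odd (ringChar (IsLocalRing.ResidueField O)))
    (q : ℕ) (hq : Nat.card (IsLocalRing.ResidueField O) = q)
    (ℓ : ℕ) (hℓ : 1 ≤ ℓ)
    -- the unramified quadratic extension 𝔒_ℓ = 𝔬_ℓ[ε]
    (OO : Type) [CommRing OO] [Algebra (O ⧸ Ideal.span {π} ^ ℓ) OO]
    (ε : OO) (u : O) (hu : IsUnit u)
    (hnonsq : ¬ ∃ t : IsLocalRing.ResidueField O, t ^ 2 = IsLocalRing.residue O u)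
    (hε2 : ε ^ 2 = algebraMap (O ⧸ Ideal.span {π} ^ ℓ) OO
      (Ideal.Quotient.mk (Ideal.span {π} ^ ℓ) u))
    (hbasis : ∀ z : OO, ∃! xy : (O ⧸ Ideal.span {π} ^ ℓ) × (O ⧸ Ideal.span {π} ^ ℓ),
      z = algebraMap (O ⧸ Ideal.span {π} ^ ℓ) OO xy.1 +
        algebraMap (O ⧸ Ideal.span {π} ^ ℓ) OO xy.2 * ε)
    -- the Galois involution `x ↦ x°`
    (cj : OO ≃ₐ[O ⧸ Ideal.span {π} ^ ℓ] OO) (hcj : cj ε = -ε)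
    (i : ℕ) (hi : i ≤ ℓ - 1) (β : O ⧸ Ideal.span {π} ^ ℓ)
    (x : (O ⧸ Ideal.span {π} ^ ℓ)ˣ) (y : OOˣ)
    (h1 : (algebraMap (O ⧸ Ideal.span {π} ^ ℓ) OO x) ^ 2 +
      (algebraMap (O ⧸ Ideal.span {π} ^ ℓ) OO
        (Ideal.Quotient.mk (Ideal.span {π} ^ ℓ) π)) ^ (2 * i + 1) *
      algebraMap (O ⧸ Ideal.span {π} ^ ℓ) OO β * ↑y * cj ↑y = 1)
    (h2 : (algebraMap (O ⧸ Ideal.span {π} ^ ℓ) OO x) ^ 2 -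
      (algebraMap (O ⧸ Ideal.span {π} ^ ℓ) OO
        (Ideal.Quotient.mk (Ideal.span {π} ^ ℓ) π)) ^ (2 * i + 1) *
      algebraMap (O ⧸ Ideal.span {π} ^ ℓ) OO β * (y : OO) ^ 2 = 1)
    (h3 : (algebraMap (O ⧸ Ideal.span {π} ^ ℓ) OO
        (Ideal.Quotient.mk (Ideal.span {π} ^ ℓ) π)) ^ i *
      (algebraMap (O ⧸ Ideal.span {π} ^ ℓ) OO x * cj ↑y +
       cj (algebraMap (O ⧸ Ideal.span {π} ^ ℓ) OO x) * ↑y) = 0)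
    (A : ↥(GU2 OO (cj : OO →+* OO)))
    (hA : ((A : GL (Fin 2) OO) : Matrix (Fin 2) (Fin 2) OO) =
      !![algebraMap (O ⧸ Ideal.span {π} ^ ℓ) OO x,
         (algebraMap (O ⧸ Ideal.span {π} ^ ℓ) OO
           (Ideal.Quotient.mk (Ideal.span {π} ^ ℓ) π)) ^ (i + 1) *
           algebraMap (O ⧸ Ideal.span {π} ^ ℓ) OO β * ↑y;
         (algebraMap (O ⧸ Ideal.span {π} ^ ℓ) OO
           (Ideal.Quotient.mk (Ideal.span {π} ^ ℓ) π)) ^ i * ↑y,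
         algebraMap (O ⧸ Ideal.span {π} ^ ℓ) OO x]) :
    IsConj A A⁻¹ ∧
      ¬ ∃ h : ↥(GU2 OO (cj : OO →+* OO)), h ^ 2 = 1 ∧ h * A * h⁻¹ = A⁻¹ :=
  type_d_real_not_strongly_real_GU2_general O π hπ hodd ℓ hℓ OO ε u hnonsq hε2 hbasis cj hcj i hi β
    x y h2 A hA
end
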